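/- Let S = (X_0,…,X_{d−1}) be a d-symbol with balanced quotient Q = Q(S). Let i ≠ j in {0,…,d−1} with Δ = |X_i| − |X_j| > 0. Then for all ℓ > Δ: |H_{ij}^ℓ(S)| = |H_{ij}^{ℓ−Δ}(Q)| and |H_{ji}^{ℓ−Δ}(S)| = |H_{ji}^ℓ(Q)|. -/

import Mathlib

/-- `X^{+s} = (X + s) ∪ {0,…,s−1}` for a β-set `X`. -/
def shiftUp (X : Finset ℕ) (s : ℕ) : Finset ℕ :=
  X.image (· + s) ∪ Finset.range s

/-- The `d`-symbol `s_d(X)` associated to a β-set `X`: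
`X_i^{(d)} = {k ∈ ℕ : i + k*d ∈ X}`. -/
def sd (d : ℕ) (X : Finset ℕ) : Fin d → Finset ℕ :=
  fun i => (X.filter fun a => a % d = (i : ℕ)).image fun a => a / d

/-- The inverse of `s_d`, recovering the β-set of a `d`-symbol. -/
def sdInv (d : ℕ) (S : Fin d → Finset ℕ) : Finset ℕ :=
  Finset.univ.biUnion fun i => (S i).image fun k => (i : ℕ) + k * d

/-- Hooks of a β-set `X`: pairs `(a,b)` with `a > b`, `a ∈ X`, `b ∉ X`. -/
def betaHooks (X : Finset ℕ) : Finset (ℕ × ℕ) :=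
  (X ×ˢ Finset.range (X.sup id + 1)).filter fun p => p.2 < p.1 ∧ p.2 ∉ X

/-- Hooks of a `d`-symbol `S`: quadruples `(a,b,i,j)` with `a ∈ S i`, `b ∉ S j`,
and either `a > b`, or `a = b` and `i > j`. -/
def symbolHooks {d : ℕ} (S : Fin d → Finset ℕ) : Finset (ℕ × ℕ × Fin d × Fin d) :=
  (Finset.range ((Finset.univ.sup fun i => (S i).sup id) + 1) ×ˢ
      Finset.range ((Finset.univ.sup fun i => (S i).sup id) + 1) ×ˢ
      (Finset.univ : Finset (Fin d)) ×ˢ (Finset.univ : Finset (Fin d))).filter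
    fun z => z.1 ∈ S z.2.2.1 ∧ z.2.1 ∉ S z.2.2.2 ∧
      (z.2.1 < z.1 ∨ (z.1 = z.2.1 ∧ z.2.2.2 < z.2.2.1))

/-- The partition `p(X)` of a β-set `X = {a_1 > … > a_t}`, as the multiset of the
nonzero numbers among `a_i − (t−i)`; the element `a` contributes the part
`a − #{b ∈ X : b < a}`. -/
def partitionOf (X : Finset ℕ) : Multiset ℕ :=
  Multiset.filter (· ≠ 0) (X.val.map fun a => a - (X.filter (· < a)).card)

/-- `r`, the maximal number of parts among the partitions `p(X_i)` of a `d`-symbol. -/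
def quotCard {d : ℕ} (S : Fin d → Finset ℕ) : ℕ :=
  Finset.univ.sup fun i => Multiset.card (partitionOf (S i))

/-- `Y` is the balanced quotient `Q(S)` of `S`: each `Y i` is the (unique) β-set of
cardinality `r` with `p(Y i) = p(S i)`, where `r` is the maximal number of parts
among the `p(S i)`. -/
def IsBalancedQuotient {d : ℕ} (S Y : Fin d → Finset ℕ) : Prop :=
  ∀ i, (Y i).card = quotCard S ∧ partitionOf (Y i) = partitionOf (S i)

/-- The core `C(S) = ([x_0],…,[x_{d−1}])` of a `d`-symbol, `x_i = |X_i|`. -/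
def coreSymbol {d : ℕ} (S : Fin d → Finset ℕ) : Fin d → Finset ℕ :=
  fun i => Finset.range (S i).card

/-- The `δ`-length `k(a−b) + c_i − c_j` of a hook `(a,b,i,j)`, for the
`d`-hook data tuple `δ = (c_0,…,c_{d−1};k)`. -/
noncomputable def hookLen {d : ℕ} (c : Fin d → ℝ) (k : ℝ)
    (z : ℕ × ℕ × Fin d × Fin d) : ℝ :=
  k * ((z.1 - z.2.1 : ℕ) : ℝ) + c z.2.2.1 - c z.2.2.2

/-- The multiset `𝓗^δ(S)` of `δ`-lengths of all hooks of `S`. -/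
noncomputable def hookLens {d : ℕ} (c : Fin d → ℝ) (k : ℝ)
    (S : Fin d → Finset ℕ) : Multiset ℝ :=
  (symbolHooks S).val.map (hookLen c k)

/-- `H_{ij}^ℓ(S)`, the set of hooks `(a,b,i,j)` of `S` with `a − b = ℓ`. -/
def Hij {d : ℕ} (S : Fin d → Finset ℕ) (i j : Fin d) (ℓ : ℕ) :
    Finset (ℕ × ℕ × Fin d × Fin d) :=
  (symbolHooks S).filter fun z => z.2.2.1 = i ∧ z.2.2.2 = j ∧ z.1 - z.2.1 = ℓ

/-- The sign-modified length `h̄^{δ_S}` (on hooks of the balanced quotient), where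
`x` records the cardinalities `x_i = |X_i|` of `S`, and `δ_S = (c_i + x_i k; k)`.
For a hook `z = (a,b,u,v)` with `ℓ = a − b`: relabelling so that `Δ = x_i − x_j ≥ 0`,
the sign is `+` if `z` lies in position `(i,j)`, or in position `(j,i)` with `ℓ > Δ`,
or in position `(j,i)` with `ℓ = Δ` and `i < j`; otherwise the sign is `−`. -/
noncomputable def signedLen {d : ℕ} (x : Fin d → ℕ) (c : Fin d → ℝ) (k : ℝ)
    (z : ℕ × ℕ × Fin d × Fin d) : ℝ :=
  if x z.2.2.2 ≤ x z.2.2.1 then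
    k * ((z.1 - z.2.1 : ℕ) : ℝ) + (c z.2.2.1 + (x z.2.2.1 : ℝ) * k)
      - (c z.2.2.2 + (x z.2.2.2 : ℝ) * k)
  else if x z.2.2.2 - x z.2.2.1 < z.1 - z.2.1 ∨
      (z.1 - z.2.1 = x z.2.2.2 - x z.2.2.1 ∧ (z.2.2.2 : ℕ) < (z.2.2.1 : ℕ)) then
    k * ((z.1 - z.2.1 : ℕ) : ℝ) + (c z.2.2.1 + (x z.2.2.1 : ℝ) * k)
      - (c z.2.2.2 + (x z.2.2.2 : ℝ) * k)
  else
    -(k * ((z.1 - z.2.1 : ℕ) : ℝ) + (c z.2.2.1 + (x z.2.2.1 : ℝ) * k)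
      - (c z.2.2.2 + (x z.2.2.2 : ℝ) * k))

/-- The permutation `σ_{d,ℓ,e}` of `ℕ`:
`σ(r(dℓ) + sd + t) = r(dℓ) + sd + ((t + re) mod d)`. -/
def twistFun (d ℓ e : ℕ) (n : ℕ) : ℕ :=
  d * ℓ * (n / (d * ℓ)) + d * (n % (d * ℓ) / d) + (n % d + n / (d * ℓ) * e) % d

/-!
For `ℓ > 0` the hooks of `S` in position `(i, j)` of length `ℓ` correspond to the `a ∈ X_i` with
`a − ℓ ∉ X_j`. Replacing `X, Z` by `X^{+s}, Z^{+t}` turns these hooks of length `m` into hooks of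
length `m + s − t`, and creates no others as long as the new length stays nonnegative. A β-set is
determined by its cardinality and its partition, so `X_i^{+r} = Y_i^{+|X_i|}` and
`X_j^{+(r+Δ)} = Y_j^{+|X_i|}`: the shifts on the `S`-side differ by `Δ` while those on the
`Q`-side agree, which is the length change `Δ` in both identities.
-/

def hookCount (X Z : Finset ℕ) (ℓ : ℕ) : ℕ :=
  (X.filter fun a => ℓ ≤ a ∧ a - ℓ ∉ Z).card

def partsWithZeros (X : Finset ℕ) : Multiset ℕ :=
  X.val.map fun a => a - (X.filter (· < a)).card

section Hooks

variable {d : ℕ} (S : Fin d → Finset ℕ)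

lemma mem_symbolHooks {z : ℕ × ℕ × Fin d × Fin d} :
    z ∈ symbolHooks S ↔ z.1 ∈ S z.2.2.1 ∧ z.2.1 ∉ S z.2.2.2 ∧
      (z.2.1 < z.1 ∨ (z.1 = z.2.1 ∧ z.2.2.2 < z.2.2.1)) := by
  refine ⟨fun hz => (Finset.mem_filter.1 hz).2, fun hz => Finset.mem_filter.2 ⟨?_, hz⟩⟩
  have hsup : z.1 ≤ Finset.univ.sup fun i => (S i).sup id :=
    (Finset.le_sup (f := id) hz.1).trans
      (Finset.le_sup (f := fun i => (S i).sup id) (Finset.mem_univ _))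
  simp only [Finset.mem_product, Finset.mem_range, Finset.mem_univ, and_true]
  omega

lemma card_Hij_eq_hookCount (i j : Fin d) {ℓ : ℕ} (hℓ : 0 < ℓ) :
    (Hij S i j ℓ).card = hookCount (S i) (S j) ℓ := by
  have hHij : Hij S i j ℓ = ((S i).filter fun a => ℓ ≤ a ∧ a - ℓ ∉ S j).image
      fun a => (a, a - ℓ, i, j) := by
    ext ⟨a, b, u, v⟩
    simp only [Hij, Finset.mem_filter, mem_symbolHooks, Finset.mem_image, Prod.mk.injEq]
    constructor
    · rintro ⟨⟨ha, hb, hab⟩, rfl, rfl, hℓab⟩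
      obtain rfl : b = a - ℓ := by omega
      exact ⟨a, ⟨ha, by omega, hb⟩, rfl, rfl, rfl, rfl⟩
    · rintro ⟨a, ⟨ha, hℓa, hb⟩, rfl, rfl, rfl, rfl⟩
      exact ⟨⟨ha, hb, Or.inl (by omega)⟩, rfl, rfl, by omega⟩
  rw [hHij, Finset.card_image_of_injective _ fun a b h => (Prod.mk.inj h).1]
  rfl

end Hooks

section Shift

variable (X : Finset ℕ) (s : ℕ)

lemma mem_shiftUp {n : ℕ} : n ∈ shiftUp X s ↔ (s ≤ n ∧ n - s ∈ X) ∨ n < s := by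
  simp only [shiftUp, Finset.mem_union, Finset.mem_image, Finset.mem_range]
  constructor
  · rintro (⟨a, ha, rfl⟩ | hn)
    · exact Or.inl ⟨by omega, by simpa using ha⟩
    · exact Or.inr hn
  · rintro (⟨hsn, hn⟩ | hn)
    · exact Or.inl ⟨n - s, hn, by omega⟩
    · exact Or.inr hn

lemma card_shiftUp : (shiftUp X s).card = X.card + s := by
  rw [shiftUp, Finset.card_union_of_disjoint, Finset.card_image_of_injective _
    (add_left_injective s), Finset.card_range]
  simp [Finset.disjoint_left]

lemma filter_lt_shiftUp_of_le {a : ℕ} (ha : a ≤ s) :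
    (shiftUp X s).filter (· < a) = Finset.range a := by
  ext n
  simp only [Finset.mem_filter, mem_shiftUp, Finset.mem_range]
  omega

lemma filter_lt_add_shiftUp (a : ℕ) :
    (shiftUp X s).filter (· < a + s) = shiftUp (X.filter (· < a)) s := by
  ext n
  simp only [Finset.mem_filter, mem_shiftUp]
  constructor
  · rintro ⟨⟨hsn, hn⟩ | hn, hlt⟩
    exacts [Or.inl ⟨hsn, hn, by omega⟩, Or.inr hn]
  · rintro (⟨hsn, hn, hlt⟩ | hn)
    exacts [⟨Or.inl ⟨hsn, hn⟩, by omega⟩, ⟨Or.inr hn, by omega⟩]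

lemma partsWithZeros_shiftUp :
    partsWithZeros (shiftUp X s) = Multiset.replicate s 0 + partsWithZeros X := by
  have hval : (shiftUp X s).val = (Finset.range s).val + X.val.map (· + s) := by
    rw [shiftUp, Finset.union_comm, ← Finset.disjUnion_eq_union _ _ (by
      simp only [Finset.disjoint_left, Finset.mem_range, Finset.mem_image]
      rintro n hn ⟨a, -, rfl⟩
      omega), Finset.disjUnion_val,
      Finset.image_val_of_injOn (add_left_injective s).injOn]
  rw [partsWithZeros, hval, Multiset.map_add, Multiset.map_map, partsWithZeros]
  congr 1
  · rw [Multiset.eq_replicate]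
    refine ⟨by simp, fun b hb => ?_⟩
    obtain ⟨a, ha, rfl⟩ := Multiset.mem_map.1 hb
    have has : a < s := Finset.mem_range.1 ha
    rw [filter_lt_shiftUp_of_le X s has.le, Finset.card_range, Nat.sub_self]
  · refine Multiset.map_congr rfl fun a _ => ?_
    rw [Function.comp_apply, filter_lt_add_shiftUp, card_shiftUp]
    omega

lemma partitionOf_shiftUp : partitionOf (shiftUp X s) = partitionOf X := by
  rw [partitionOf, ← partsWithZeros, partsWithZeros_shiftUp, Multiset.filter_add,
    Multiset.filter_eq_nil.2 fun a ha => by simp [Multiset.eq_of_mem_replicate ha], zero_add]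
  rfl

end Shift

lemma hookCount_shiftUp (X Z : Finset ℕ) {s t ℓ m : ℕ} (h : ℓ + t = m + s) :
    hookCount (shiftUp X s) (shiftUp Z t) ℓ = hookCount X Z m := by
  have hfilter : (shiftUp X s).filter (fun n => ℓ ≤ n ∧ n - ℓ ∉ shiftUp Z t) =
      (X.filter fun a => m ≤ a ∧ a - m ∉ Z).image (· + s) := by
    ext n
    simp only [Finset.mem_filter, Finset.mem_image, mem_shiftUp]
    constructor
    · rintro ⟨⟨hsn, hn⟩ | hn, hℓn, hfoot⟩
      · refine ⟨n - s, ⟨hn, ?_, fun hZ => hfoot (Or.inl ⟨by omega, ?_⟩)⟩, by omega⟩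
        · by_contra; exact hfoot (Or.inr (by omega))
        · rwa [show n - ℓ - t = n - s - m by omega]
      · exact (hfoot (Or.inr (by omega))).elim
    · rintro ⟨a, ⟨ha, hma, hfoot⟩, rfl⟩
      refine ⟨Or.inl ⟨by omega, by simpa using ha⟩, by omega, ?_⟩
      rintro (⟨-, hZ⟩ | hlt)
      · exact hfoot (by rwa [show a + s - ℓ - t = a - m by omega] at hZ)
      · omega
  rw [hookCount, hfilter, Finset.card_image_of_injective _ (add_left_injective s)]
  rfl

section Parts

variable (X : Finset ℕ)

lemma sub_card_filter_lt_mono {a b : ℕ} (hab : a ≤ b) :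
    a - (X.filter (· < a)).card ≤ b - (X.filter (· < b)).card := by
  have hsub : X.filter (· < b) ⊆ X.filter (· < a) ∪ Finset.Ico a b := by
    intro x hx
    simp only [Finset.mem_filter, Finset.mem_union, Finset.mem_Ico] at hx ⊢
    rcases lt_or_ge x a with hxa | hxa
    exacts [Or.inl ⟨hx.1, hxa⟩, Or.inr ⟨hxa, hx.2⟩]
  have := (Finset.card_le_card hsub).trans (Finset.card_union_le _ _)
  rw [Nat.card_Ico] at this
  omega

lemma filter_lt_max' (h : X.Nonempty) : X.filter (· < X.max' h) = X.erase (X.max' h) := by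
  ext x
  simp only [Finset.mem_filter, Finset.mem_erase]
  exact ⟨fun ⟨hx, hlt⟩ => ⟨hlt.ne, hx⟩,
    fun ⟨hne, hx⟩ => ⟨hx, (X.le_max' x hx).lt_of_ne hne⟩⟩

lemma card_le_max'_add_one (h : X.Nonempty) : X.card ≤ X.max' h + 1 := by
  simpa using Finset.card_le_card fun x hx => Finset.mem_range_succ_iff.2 (X.le_max' x hx)

lemma partsWithZeros_eq_cons (h : X.Nonempty) :
    partsWithZeros X = (X.max' h - (X.card - 1)) ::ₘ partsWithZeros (X.erase (X.max' h)) := by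
  have hval : X.val = X.max' h ::ₘ (X.erase (X.max' h)).val := by
    rw [Finset.erase_val, Multiset.cons_erase (X.max'_mem h)]
  rw [partsWithZeros, hval, Multiset.map_cons, filter_lt_max',
    Finset.card_erase_of_mem (X.max'_mem h), partsWithZeros]
  refine congrArg _ (Multiset.map_congr rfl fun a ha => ?_)
  have ha' : a < X.max' h := Finset.lt_max'_of_mem_erase_max' X h ha
  rw [Finset.filter_erase, Finset.erase_eq_of_notMem
    (fun hmem => (Finset.mem_filter.1 hmem).2.not_gt ha')]

lemma sup_partsWithZeros (h : X.Nonempty) :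
    (partsWithZeros X).sup = X.max' h - (X.card - 1) := by
  have hmax : X.max' h - (X.filter (· < X.max' h)).card = X.max' h - (X.card - 1) := by
    rw [filter_lt_max', Finset.card_erase_of_mem (X.max'_mem h)]
  rw [partsWithZeros, ← Finset.sup_def, ← hmax]
  exact le_antisymm (Finset.sup_le fun a ha => sub_card_filter_lt_mono X (X.le_max' a ha))
    (Finset.le_sup (f := fun a => a - (X.filter (· < a)).card) (X.max'_mem h))

theorem partsWithZeros_injective : Function.Injective partsWithZeros := by
  suffices ∀ n (X Y : Finset ℕ), X.card = n → partsWithZeros X = partsWithZeros Y → X = Y from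
    fun X Y => this _ X Y rfl
  intro n
  induction n with
  | zero =>
    intro X Y hX hXY
    have hY : Y.card = 0 := by simpa [partsWithZeros, hX] using (congrArg Multiset.card hXY).symm
    rw [Finset.card_eq_zero.1 hX, Finset.card_eq_zero.1 hY]
  | succ n ih =>
    intro X Y hX hXY
    have hY : Y.card = n + 1 := by
      simpa [partsWithZeros, hX] using (congrArg Multiset.card hXY).symm
    have hXne : X.Nonempty := Finset.card_pos.1 (by omega)
    have hYne : Y.Nonempty := Finset.card_pos.1 (by omega)
    -- the largest part belongs to the largest element, whose part is `max' − (card − 1)`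
    have hmax : X.max' hXne = Y.max' hYne := by
      have hsup := congrArg Multiset.sup hXY
      rw [sup_partsWithZeros X hXne, sup_partsWithZeros Y hYne] at hsup
      have := card_le_max'_add_one X hXne
      have := card_le_max'_add_one Y hYne
      omega
    rw [partsWithZeros_eq_cons X hXne, partsWithZeros_eq_cons Y hYne, hX, hY, hmax] at hXY
    have herase := ih _ _ (by rw [← hmax, Finset.card_erase_of_mem (X.max'_mem hXne), hX]; rfl)
      ((Multiset.cons_inj_right _).1 hXY)
    rw [← Finset.insert_erase (X.max'_mem hXne), ← Finset.insert_erase (Y.max'_mem hYne), hmax,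
      herase]

lemma partsWithZeros_eq_partitionOf_add :
    partsWithZeros X =
      partitionOf X + Multiset.replicate (X.card - Multiset.card (partitionOf X)) 0 := by
  have hsplit := Multiset.filter_add_not (· ≠ 0) (partsWithZeros X)
  have hcard : Multiset.card (Multiset.filter (· ≠ 0) (partsWithZeros X)) +
      Multiset.card (Multiset.filter (fun a => ¬a ≠ 0) (partsWithZeros X)) = X.card := by
    rw [← Multiset.card_add, hsplit, partsWithZeros, Multiset.card_map, Finset.card_val]
  conv_lhs => rw [← hsplit]
  refine congrArg _ (Multiset.eq_replicate.2 ⟨?_, fun b hb => ?_⟩)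
  · change _ = X.card - Multiset.card (Multiset.filter (· ≠ 0) (partsWithZeros X))
    omega
  · simpa using (Multiset.mem_filter.1 hb).2

end Parts

lemma eq_of_partitionOf_eq {X Y : Finset ℕ} (hc : X.card = Y.card)
    (hp : partitionOf X = partitionOf Y) : X = Y :=
  partsWithZeros_injective <| by
    rw [partsWithZeros_eq_partitionOf_add, partsWithZeros_eq_partitionOf_add, hc, hp]

lemma shiftUp_eq_shiftUp_of_partitionOf_eq {X Y : Finset ℕ} {s t : ℕ}
    (hp : partitionOf X = partitionOf Y) (hc : X.card + s = Y.card + t) :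
    shiftUp X s = shiftUp Y t :=
  eq_of_partitionOf_eq (by rw [card_shiftUp, card_shiftUp, hc])
    (by rw [partitionOf_shiftUp, partitionOf_shiftUp, hp])

theorem card_Hij_of_gt_delta_general (d : ℕ) (S Y : Fin d → Finset ℕ)
    (hY : IsBalancedQuotient S Y) (i j : Fin d)
    (hΔ : (S j).card < (S i).card) (ℓ : ℕ) (hℓ : (S i).card - (S j).card < ℓ) :
    (Hij S i j ℓ).card = (Hij Y i j (ℓ - ((S i).card - (S j).card))).card ∧
    (Hij S j i (ℓ - ((S i).card - (S j).card))).card = (Hij Y j i ℓ).card := by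
  set Δ := (S i).card - (S j).card
  set r := quotCard S
  have hi : shiftUp (S i) r = shiftUp (Y i) (S i).card :=
    shiftUp_eq_shiftUp_of_partitionOf_eq (hY i).2.symm (by rw [(hY i).1, add_comm])
  have hj : shiftUp (S j) (r + Δ) = shiftUp (Y j) (S i).card :=
    shiftUp_eq_shiftUp_of_partitionOf_eq (hY j).2.symm (by rw [(hY j).1]; omega)
  rw [card_Hij_eq_hookCount S i j (by omega), card_Hij_eq_hookCount Y i j (by omega),
    card_Hij_eq_hookCount S j i (by omega), card_Hij_eq_hookCount Y j i (by omega)]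
  constructor
  · rw [← hookCount_shiftUp (S i) (S j) (s := r) (t := r + Δ) (ℓ := ℓ - Δ) (by omega), hi, hj,
      hookCount_shiftUp _ _ rfl]
  · rw [← hookCount_shiftUp (S j) (S i) (s := r + Δ) (t := r) (ℓ := ℓ) (by omega), hi, hj,
      hookCount_shiftUp _ _ rfl]

/-- For `i ≠ j` with `Δ = |X_i| − |X_j| > 0` and all `ℓ > Δ`:
`|H_{ij}^ℓ(S)| = |H_{ij}^{ℓ−Δ}(Q)|` and `|H_{ji}^{ℓ−Δ}(S)| = |H_{ji}^ℓ(Q)|`. -/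
theorem card_Hij_of_gt_delta (d : ℕ) (hd : 0 < d) (S Y : Fin d → Finset ℕ)
    (hY : IsBalancedQuotient S Y) (i j : Fin d) (hij : i ≠ j)
    (hΔ : (S j).card < (S i).card) (ℓ : ℕ) (hℓ : (S i).card - (S j).card < ℓ) :
    (Hij S i j ℓ).card = (Hij Y i j (ℓ - ((S i).card - (S j).card))).card ∧
    (Hij S j i (ℓ - ((S i).card - (S j).card))).card = (Hij Y j i ℓ).card :=
  card_Hij_of_gt_delta_general d S Y hY i j hΔ ℓ hℓ
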